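/- Let H be a finite-dimensional complex inner product space, let U, W, V be unitary operators on H, let {e_i} be an orthonormal eigenbasis of W and {f_k} an orthonormal eigenbasis of V, and let ρ be a density operator on H. Then for every fixed index k₁, marginalizing the combined quantum amplitude over all other indices yields a probability: Σ_{i₂,i₃,k₂} Ã_ρ(i₂,i₃,k₁,k₂) = ⟨f_{k₁}, ρ f_{k₁}⟩, which is a real number lying in the interval [0, 1]. -/

import Mathlib

/-!
Each of the sums over `i₃`, `k₂` and `i₂` is a resolution of the identity
`∑ᵢ ⟪x, T bᵢ⟫ ⟪bᵢ, y⟫ = ⟪x, T y⟫`, so the marginal collapses to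
`⟪f k₁, ρ U†U U†U f k₁⟫ = ⟪f k₁, ρ f k₁⟫`. Positivity of `ρ` makes this diagonal entry
nonnegative in the order of `ℂ` (hence real), and it is one of the nonnegative terms of
`tr ρ = ∑ₖ ⟪f k, ρ f k⟫ = 1`.
-/

open scoped InnerProductSpace ComplexOrder
open ContinuousLinearMap

theorem OrthonormalBasis.sum_inner_map_mul_inner {ι 𝕜 E F : Type*} [Fintype ι] [RCLike 𝕜]
    [NormedAddCommGroup E] [InnerProductSpace 𝕜 E] [NormedAddCommGroup F] [InnerProductSpace 𝕜 F]
    (b : OrthonormalBasis ι 𝕜 E) (T : E →L[𝕜] F) (x : F) (y : E) :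
    ∑ i, ⟪x, T (b i)⟫_𝕜 * ⟪b i, y⟫_𝕜 = ⟪x, T y⟫_𝕜 := by
  conv_rhs => rw [← b.sum_repr' y]
  simp [inner_sum, inner_smul_right, mul_comm]

theorem ContinuousLinearMap.adjoint_apply_apply_of_mem_unitary {𝕜 E : Type*} [RCLike 𝕜]
    [NormedAddCommGroup E] [InnerProductSpace 𝕜 E] [CompleteSpace E]
    {U : E →L[𝕜] E} (hU : U ∈ unitary (E →L[𝕜] E)) (x : E) : adjoint U (U x) = x := by
  simpa [star_eq_adjoint] using DFunLike.congr_fun (Unitary.star_mul_self_of_mem hU) x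

theorem LinearMap.IsPositive.inner_le_trace {ι 𝕜 E : Type*} [Fintype ι] [RCLike 𝕜]
    [NormedAddCommGroup E] [InnerProductSpace 𝕜 E] {T : E →ₗ[𝕜] E} (hT : T.IsPositive)
    (b : OrthonormalBasis ι 𝕜 E) (i : ι) : ⟪b i, T (b i)⟫_𝕜 ≤ T.trace 𝕜 E := by
  rw [T.trace_eq_sum_inner b]
  exact Finset.single_le_sum (fun j _ => hT.inner_nonneg_right (b j)) (Finset.mem_univ i)

theorem sum_amplitude_eq_inner {I K H : Type*} [Fintype I] [Fintype K]
    [NormedAddCommGroup H] [InnerProductSpace ℂ H] [CompleteSpace H]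
    {U : H →L[ℂ] H} (hU : U ∈ unitary (H →L[ℂ] H)) (ρ : H →L[ℂ] H)
    (e : OrthonormalBasis I ℂ H) (f : OrthonormalBasis K ℂ H) (k₁ : K) :
    ∑ i₂ : I, ∑ i₃ : I, ∑ k₂ : K,
      ⟪e i₃, U (f k₂)⟫_ℂ * ⟪f k₂, (adjoint U) (e i₂)⟫_ℂ *
        ⟪e i₂, U (f k₁)⟫_ℂ * ⟪f k₁, ρ ((adjoint U) (e i₃))⟫_ℂ
      = ⟪f k₁, ρ (f k₁)⟫_ℂ :=
  calc _ = ∑ i₂, (∑ k₂, (∑ i₃, ⟪f k₁, (ρ ∘L adjoint U) (e i₃)⟫_ℂ * ⟪e i₃, U (f k₂)⟫_ℂ) *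
              ⟪f k₂, adjoint U (e i₂)⟫_ℂ) * ⟪e i₂, U (f k₁)⟫_ℂ := by
        simp only [Finset.sum_mul]
        refine Finset.sum_congr rfl fun i₂ _ => ?_
        rw [Finset.sum_comm]
        refine Finset.sum_congr rfl fun k₂ _ => Finset.sum_congr rfl fun i₃ _ => ?_
        rw [comp_apply]
        ring
    _ = ∑ i₂, (∑ k₂, ⟪f k₁, ρ (f k₂)⟫_ℂ * ⟪f k₂, adjoint U (e i₂)⟫_ℂ) *
              ⟪e i₂, U (f k₁)⟫_ℂ := by
        simp_rw [e.sum_inner_map_mul_inner, comp_apply, adjoint_apply_apply_of_mem_unitary hU]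
    _ = ∑ i₂, ⟪f k₁, (ρ ∘L adjoint U) (e i₂)⟫_ℂ * ⟪e i₂, U (f k₁)⟫_ℂ := by
        simp_rw [f.sum_inner_map_mul_inner, comp_apply]
    _ = ⟪f k₁, ρ (f k₁)⟫_ℂ := by
        rw [e.sum_inner_map_mul_inner, comp_apply, adjoint_apply_apply_of_mem_unitary hU]

theorem combined_amplitude_marginal_k₁_general
    {H : Type*} [NormedAddCommGroup H] [InnerProductSpace ℂ H] [FiniteDimensional ℂ H]
    {I K : Type*} [Fintype I] [Fintype K]
    (U ρ : H →L[ℂ] H)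
    (hU : U ∈ unitary (H →L[ℂ] H))
    (e : OrthonormalBasis I ℂ H) (f : OrthonormalBasis K ℂ H)
    (hρpos : ρ.IsPositive)
    (hρtr : LinearMap.trace ℂ H ρ.toLinearMap = 1)
    (k₁ : K) :
    (∑ i₂ : I, ∑ i₃ : I, ∑ k₂ : K,
      ⟪e i₃, U (f k₂)⟫_ℂ * ⟪f k₂, (adjoint U) (e i₂)⟫_ℂ *
        ⟪e i₂, U (f k₁)⟫_ℂ * ⟪f k₁, ρ ((adjoint U) (e i₃))⟫_ℂ
      = ⟪f k₁, ρ (f k₁)⟫_ℂ)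
    ∧ (⟪f k₁, ρ (f k₁)⟫_ℂ).im = 0
    ∧ (⟪f k₁, ρ (f k₁)⟫_ℂ).re ∈ Set.Icc (0 : ℝ) 1 := by
  have h_nonneg := Complex.nonneg_iff.mp (hρpos.inner_nonneg_right (f k₁))
  have h_le_one := Complex.le_def.mp (hρtr ▸ hρpos.toLinearMap.inner_le_trace f k₁)
  exact ⟨sum_amplitude_eq_inner hU ρ e f k₁, h_le_one.2, h_nonneg.1, h_le_one.1⟩

/-- **Marginalizing `Ã_ρ` over all indices except `k₁` yields a probability:**
`∑_{i₂,i₃,k₂} Ã_ρ(i₂,i₃,k₁,k₂) = ⟨f_{k₁}, ρ f_{k₁}⟩`, a real number in `[0,1]`. -/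
theorem combined_amplitude_marginal_k₁
    {H : Type*} [NormedAddCommGroup H] [InnerProductSpace ℂ H] [FiniteDimensional ℂ H]
    {I K : Type*} [Fintype I] [Fintype K]
    (U W V ρ : H →L[ℂ] H)
    (hU : U ∈ unitary (H →L[ℂ] H))
    (hW : W ∈ unitary (H →L[ℂ] H))
    (hV : V ∈ unitary (H →L[ℂ] H))
    (e : OrthonormalBasis I ℂ H) (f : OrthonormalBasis K ℂ H)
    (hWe : ∀ i, ∃ c : ℂ, W (e i) = c • e i)
    (hVf : ∀ k, ∃ c : ℂ, V (f k) = c • f k)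
    (hρpos : ρ.IsPositive)
    (hρtr : LinearMap.trace ℂ H ρ.toLinearMap = 1)
    (k₁ : K) :
    (∑ i₂ : I, ∑ i₃ : I, ∑ k₂ : K,
      ⟪e i₃, U (f k₂)⟫_ℂ * ⟪f k₂, (adjoint U) (e i₂)⟫_ℂ *
        ⟪e i₂, U (f k₁)⟫_ℂ * ⟪f k₁, ρ ((adjoint U) (e i₃))⟫_ℂ
      = ⟪f k₁, ρ (f k₁)⟫_ℂ)
    ∧ (⟪f k₁, ρ (f k₁)⟫_ℂ).im = 0
    ∧ (⟪f k₁, ρ (f k₁)⟫_ℂ).re ∈ Set.Icc (0 : ℝ) 1 :=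
  combined_amplitude_marginal_k₁_general U ρ hU e f hρpos hρtr k₁
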